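/- For any nonnegative integer A, the sum over n ≥ 0 of q^{n^2 + A n} / ((q)_n (q)_{n+A}) equals 1/(q)_∞, where (q)_∞ = ∏_{k≥1}(1-q^k). (Durfee rectangle identity.) -/

import Mathlib

/-!
Put `t_A(n, d) = q^(n² + A n) / ((q)_n (q)_d (q)_(n+A))`. Splitting
`1 - q^(n+d) = (1 - q^n) + q^n (1 - q^d)` and shifting `n`, respectively `d`, down by one gives
`(1 - q^(M+1)) ∑_{n+d=M+1} t_A(n, d) = ∑_{n+d=M} t_(A+1)(n, d)`, so by induction on `M`
`∑_{n+d=M} t_A(n, d) = 1 / ((q)_M (q)_(M+A))`. Multiplying by `(q)_(M+A)` and letting `M → ∞`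
(Tannery's theorem, the terms being dominated by a multiple of `‖q‖^n`) gives the identity.
-/

open scoped BigOperators

noncomputable def qPoch (q : ℂ) (n : ℕ) : ℂ := ∏ k ∈ Finset.range n, (1 - q ^ (k + 1))

noncomputable def qPochInf (q : ℂ) : ℂ := ∏' k : ℕ, (1 - q ^ (k + 1))

noncomputable def hseries (b : ℕ) (q : ℂ) : ℂ :=
  ∑' n : ℤ, (if Odd b then (-1 : ℂ) ^ n else if 0 ≤ n then 1 else -1) *
    q ^ ((b : ℤ) * n * (n + 1) / 2 - n)

open Finset Filter Topology

section Finite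

variable {q : ℂ}

lemma qPoch_succ (n : ℕ) : qPoch q (n + 1) = qPoch q n * (1 - q ^ (n + 1)) :=
  prod_range_succ _ _

lemma one_sub_pow_succ_ne_zero (hq : ∀ k : ℕ, q ^ (k + 1) ≠ 1) (k : ℕ) : 1 - q ^ (k + 1) ≠ 0 :=
  sub_ne_zero.mpr (hq k).symm

lemma qPoch_ne_zero (hq : ∀ k : ℕ, q ^ (k + 1) ≠ 1) (n : ℕ) : qPoch q n ≠ 0 :=
  prod_ne_zero_iff.mpr fun k _ => one_sub_pow_succ_ne_zero hq k

noncomputable def durfeeTerm (q : ℂ) (A n d : ℕ) : ℂ :=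
  q ^ (n ^ 2 + A * n) / (qPoch q n * qPoch q d * qPoch q (n + A))

variable (hq : ∀ k : ℕ, q ^ (k + 1) ≠ 1)
include hq

lemma one_sub_pow_mul_durfeeTerm_succ_left (A n d : ℕ) :
    (1 - q ^ (n + 1)) * durfeeTerm q A (n + 1) d = q ^ (n + A + 1) * durfeeTerm q (A + 1) n d := by
  have := qPoch_ne_zero hq
  have := one_sub_pow_succ_ne_zero hq n
  have := one_sub_pow_succ_ne_zero hq (n + A)
  simp only [durfeeTerm, qPoch_succ, add_right_comm n 1 A, ← add_assoc]
  field_simp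
  ring

lemma pow_mul_one_sub_pow_mul_durfeeTerm_succ_right (A n d : ℕ) :
    q ^ n * (1 - q ^ (d + 1)) * durfeeTerm q A n (d + 1) =
      (1 - q ^ (n + A + 1)) * durfeeTerm q (A + 1) n d := by
  have := qPoch_ne_zero hq
  have := one_sub_pow_succ_ne_zero hq d
  have := one_sub_pow_succ_ne_zero hq (n + A)
  simp only [durfeeTerm, qPoch_succ, ← add_assoc]
  field_simp
  ring

lemma sum_antidiagonal_succ_durfeeTerm (A M : ℕ) :
    (1 - q ^ (M + 1)) * ∑ p ∈ antidiagonal (M + 1), durfeeTerm q A p.1 p.2 =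
      ∑ p ∈ antidiagonal M, durfeeTerm q (A + 1) p.1 p.2 := by
  have split : ∀ p ∈ antidiagonal (M + 1), (1 - q ^ (M + 1)) * durfeeTerm q A p.1 p.2 =
      (1 - q ^ p.1) * durfeeTerm q A p.1 p.2 +
        q ^ p.1 * (1 - q ^ p.2) * durfeeTerm q A p.1 p.2 := by
    intro p hp
    rw [← mem_antidiagonal.mp hp, pow_add]
    ring
  rw [mul_sum, sum_congr rfl split, sum_add_distrib, Nat.sum_antidiagonal_succ,
    Nat.sum_antidiagonal_succ']
  simp only [pow_zero, sub_self, zero_mul, zero_add, mul_zero,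
    one_sub_pow_mul_durfeeTerm_succ_left hq, pow_mul_one_sub_pow_mul_durfeeTerm_succ_right hq]
  rw [← sum_add_distrib]
  refine sum_congr rfl fun p _ => ?_
  ring

lemma sum_antidiagonal_durfeeTerm (M A : ℕ) :
    ∑ p ∈ antidiagonal M, durfeeTerm q A p.1 p.2 = (qPoch q M * qPoch q (M + A))⁻¹ := by
  induction M generalizing A with
  | zero => simp [durfeeTerm, qPoch]
  | succ M ih =>
    have h := sum_antidiagonal_succ_durfeeTerm hq A M
    rw [ih, mul_comm, ← eq_div_iff (one_sub_pow_succ_ne_zero hq M)] at h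
    rw [h, qPoch_succ, add_right_comm, ← add_assoc, qPoch_succ]
    field_simp

lemma qPoch_mul_sum_range_durfeeTerm (A M : ℕ) :
    ∑ n ∈ range (M + 1), qPoch q (M + A) * durfeeTerm q A n (M - n) = (qPoch q M)⁻¹ := by
  rw [← mul_sum, ← Nat.sum_antidiagonal_eq_sum_range_succ (durfeeTerm q A),
    sum_antidiagonal_durfeeTerm hq, mul_comm (qPoch q M), mul_inv,
    mul_inv_cancel_left₀ (qPoch_ne_zero hq _)]

end Finite

section Limit

variable {q : ℂ}

lemma pow_succ_ne_one_of_norm_lt_one (hq : ‖q‖ < 1) (k : ℕ) : q ^ (k + 1) ≠ 1 := fun h =>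
  (pow_lt_one₀ (norm_nonneg q) hq k.succ_ne_zero).ne (by rw [← norm_pow, h, norm_one])

lemma tendsto_qPoch (hq : ‖q‖ < 1) : Tendsto (qPoch q) atTop (𝓝 (qPochInf q)) :=
  (ModularForm.multipliable_one_sub_pow hq).hasProd.tendsto_prod_nat

lemma qPochInf_ne_zero (hq : ‖q‖ < 1) : qPochInf q ≠ 0 := by
  simp_rw [qPochInf, sub_eq_add_neg]
  refine tprod_one_add_ne_zero_of_summable (fun k => ?_) ?_
  · rw [← sub_eq_add_neg]
    exact one_sub_pow_succ_ne_zero (pow_succ_ne_one_of_norm_lt_one hq) k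
  · simpa using (summable_nat_add_iff 1).mpr (summable_geometric_of_lt_one (norm_nonneg _) hq)

lemma exists_forall_norm_le_of_tendsto {E : Type*} [SeminormedAddCommGroup E] {u : ℕ → E} {a : E}
    (h : Tendsto u atTop (𝓝 a)) : ∃ C, ∀ n, ‖u n‖ ≤ C := by
  obtain ⟨C, hC⟩ := isBounded_iff_forall_norm_le.mp (Metric.isBounded_range_of_tendsto u h)
  exact ⟨C, fun n => hC _ ⟨n, rfl⟩⟩

lemma exists_norm_qPoch_mul_durfeeTerm_le (hq : ‖q‖ < 1) (A : ℕ) :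
    ∃ B, ∀ m n d, ‖qPoch q m * durfeeTerm q A n d‖ ≤ B * ‖q‖ ^ n := by
  obtain ⟨C, hC⟩ := exists_forall_norm_le_of_tendsto (tendsto_qPoch hq)
  obtain ⟨D, hD⟩ :=
    exists_forall_norm_le_of_tendsto ((tendsto_qPoch hq).inv₀ (qPochInf_ne_zero hq))
  refine ⟨C * D ^ 3, fun m n d => ?_⟩
  have hpow : ‖q‖ ^ (n ^ 2 + A * n) ≤ ‖q‖ ^ n :=
    pow_le_pow_of_le_one (norm_nonneg q) hq.le (by nlinarith)
  have hC0 : 0 ≤ C := (norm_nonneg _).trans (hC 0)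
  have hD0 : 0 ≤ D := (norm_nonneg _).trans (hD 0)
  simp only [durfeeTerm, div_eq_mul_inv, mul_inv, norm_mul, norm_pow]
  calc ‖qPoch q m‖ * (‖q‖ ^ (n ^ 2 + A * n) *
        (‖(qPoch q n)⁻¹‖ * ‖(qPoch q d)⁻¹‖ * ‖(qPoch q (n + A))⁻¹‖))
      ≤ C * (‖q‖ ^ n * (D * D * D)) := by gcongr <;> first | exact hC _ | exact hD _
    _ = C * D ^ 3 * ‖q‖ ^ n := by ring

lemma tendsto_qPoch_mul_durfeeTerm (hq : ‖q‖ < 1) (A n : ℕ) :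
    Tendsto (fun M => qPoch q (M + A) * durfeeTerm q A n (M - n)) atTop
      (𝓝 (q ^ (n ^ 2 + A * n) / (qPoch q n * qPoch q (n + A)))) := by
  have hratio : Tendsto (fun M => qPoch q (M + A) / qPoch q (M - n)) atTop (𝓝 1) := by
    rw [← div_self (qPochInf_ne_zero hq)]
    exact ((tendsto_qPoch hq).comp (tendsto_add_atTop_nat A)).div
      ((tendsto_qPoch hq).comp (tendsto_sub_atTop_nat n)) (qPochInf_ne_zero hq)
  convert hratio.const_mul (q ^ (n ^ 2 + A * n) / (qPoch q n * qPoch q (n + A))) using 2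
  · simp only [durfeeTerm]
    ring
  · rw [mul_one]

end Limit

theorem durfee_rectangle (q : ℂ) (hq : ‖q‖ < 1) (A : ℕ) :
    ∑' n : ℕ, q ^ (n ^ 2 + A * n) / (qPoch q n * qPoch q (n + A)) = 1 / qPochInf q := by
  let f M := (range (M + 1) : Set ℕ).indicator fun n => qPoch q (M + A) * durfeeTerm q A n (M - n)
  obtain ⟨B, hB⟩ := exists_norm_qPoch_mul_durfeeTerm_le hq A
  have hf : Tendsto (fun M => ∑' n, f M n) atTop
      (𝓝 (∑' n, q ^ (n ^ 2 + A * n) / (qPoch q n * qPoch q (n + A)))) := by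
    refine tendsto_tsum_of_dominated_convergence
      ((summable_geometric_of_lt_one (norm_nonneg q) hq).mul_left B) (fun n => ?_)
      (.of_forall fun M n => (norm_indicator_le_norm_self _ _).trans (hB _ _ _))
    refine (tendsto_qPoch_mul_durfeeTerm hq A n).congr' ?_
    filter_upwards [eventually_ge_atTop n] with M hM
    simp [f, Nat.lt_succ_of_le hM]
  have hsum (M : ℕ) : ∑' n, f M n = (qPoch q M)⁻¹ := by
    rw [← sum_eq_tsum_indicator, qPoch_mul_sum_range_durfeeTerm (pow_succ_ne_one_of_norm_lt_one hq)]
  simp only [hsum] at hf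
  rw [one_div]
  exact tendsto_nhds_unique hf ((tendsto_qPoch hq).inv₀ (qPochInf_ne_zero hq))
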